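/- arXiv:1711.03871 — 2 statements merged into one kernel-verified Lean document; each statement's English description precedes it below -/
import Mathlib

section
/- Step-index monotonicity (downward closure): if a pair of values is related at type τ in world W, and W' is a future world of W (in particular with a smaller or equal step index), then the pair is related at τ in W'. -/
namespace FunTAL

/-- An abstract memory (e.g. a TAL memory consisting of heap, register file
and stack). -/
def Mem : Type := ℕ

/-- An island of a step-indexed Kripke world: a state-transition system
(states with a transition relation, of which the public transitions are a
subrelation), a current state, and a step-indexed memory relation assigning
to each state and step index a set of pairs of related memories. -/
structure Island where
  /-- abstract states of the transition system -/
  trans : ℕ → ℕ → Prop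
  /-- public transitions, a subrelation of all transitions -/
  pub : ℕ → ℕ → Prop
  pub_le : ∀ s s', pub s s' → trans s s'
  /-- the current state -/
  cur : ℕ
  /-- the memory relation: in each state and at each step index, which pairs
  of memories are related -/
  memrel : ℕ → ℕ → Set (Mem × Mem)

/-- A step-indexed Kripke world: a step index together with a finite
sequence of islands. -/
structure World where
  k : ℕ
  islands : List Island

/-- Truncation of a step-indexed memory relation to step indices below `k`. -/
def truncate (k : ℕ) (R : ℕ → ℕ → Set (Mem × Mem)) : ℕ → ℕ → Set (Mem × Mem) :=
  fun s j => if j < k then R s j else ∅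

/-- The future-world relation `W' ⊒ W`: the step index may decrease, islands
may be added, and each existing island keeps the same transition system
(and memory relation up to truncation at the lower step index) while its
current state makes zero or more transitions. -/
def extends_ (W' W : World) : Prop :=
  W'.k ≤ W.k ∧
  W.islands.length ≤ W'.islands.length ∧
  ∀ i (h : i < W.islands.length) (h' : i < W'.islands.length),
    (W'.islands[i].trans = W.islands[i].trans) ∧
    (W'.islands[i].pub = W.islands[i].pub) ∧
    (truncate W'.k W'.islands[i].memrel = truncate W'.k W.islands[i].memrel) ∧
    Relation.ReflTransGen W.islands[i].trans W.islands[i].cur W'.islands[i].cur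

/-- Types of a small language with iso-recursive types: type variables
(de Bruijn), unit, int, products, and recursive types `μα.τ`. -/
inductive VTy : Type
  | tvar : ℕ → VTy
  | unit : VTy
  | int : VTy
  | pair : VTy → VTy → VTy
  | mu : VTy → VTy

/-- Substitution of a closed type `u` for type variable `k`. -/
def substV (u : VTy) : ℕ → VTy → VTy
  | k, .tvar n => if n = k then u else if k < n then .tvar (n-1) else .tvar n
  | _, .unit => .unit
  | _, .int => .int
  | k, .pair t1 t2 => .pair (substV u k t1) (substV u k t2)
  | k, .mu t => .mu (substV u (k+1) t)

/-- Values. -/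
inductive Val : Type
  | unit : Val
  | int : ℤ → Val
  | pair : Val → Val → Val
  | fold : Val → Val

/-- The step-indexed Kripke value relation `V⟦τ⟧`, defined by recursion on
the step index `k` (and, secondarily, the structure of the type): at a
recursive type `μα.τ`, folded values are related at index `k` iff the
unfolded values are related at the substituted type at every strictly
smaller index, in every future world. -/
def V : ℕ → List Island → VTy → Val → Val → Prop
  | _, _, .tvar _, _, _ => False
  | _, _, .unit, v1, v2 => v1 = .unit ∧ v2 = .unit
  | _, _, .int, v1, v2 => ∃ n, v1 = .int n ∧ v2 = .int n
  | k, isl, .pair t1 t2, v1, v2 =>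
      ∃ a1 b1 a2 b2, v1 = .pair a1 b1 ∧ v2 = .pair a2 b2 ∧
        V k isl t1 a1 a2 ∧ V k isl t2 b1 b2
  | k, isl, .mu t, v1, v2 =>
      ∃ w1 w2, v1 = .fold w1 ∧ v2 = .fold w2 ∧
        ∀ j, j < k → ∀ W' : World, W'.k = j → extends_ W' ⟨k, isl⟩ →
          V j W'.islands (substV (.mu t) 0 t) w1 w2
  termination_by k _ t => (k, sizeOf t)

/-- Values related in a world `W`. -/
def Vrel (W : World) (τ : VTy) (v1 v2 : Val) : Prop :=
  V W.k W.islands τ v1 v2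

theorem extends_trans {W'' W' W : World} (h2 : extends_ W'' W')
    (h1 : extends_ W' W) : extends_ W'' W := by
  obtain ⟨hk2, hl2, hi2⟩ := h2
  obtain ⟨hk1, hl1, hi1⟩ := h1
  refine ⟨hk2.trans hk1, hl1.trans hl2, ?_⟩
  intro i h h''
  have h' : i < W'.islands.length := lt_of_lt_of_le h hl1
  obtain ⟨ht2, hp2, hm2, hr2⟩ := hi2 i h' h''
  obtain ⟨ht1, hp1, hm1, hr1⟩ := hi1 i h h'
  refine ⟨ht2.trans ht1, hp2.trans hp1, ?_, ?_⟩
  · funext s j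
    by_cases hj : j < W''.k
    · have e2 := congrFun (congrFun hm2 s) j
      have e1 := congrFun (congrFun hm1 s) j
      have hj' : j < W'.k := lt_of_lt_of_le hj hk2
      simp only [truncate, if_pos hj] at e2 ⊢
      simp only [truncate, if_pos hj'] at e1
      rw [e2, e1]
    · simp [truncate, hj]
  · exact hr1.trans (ht1 ▸ hr2)

/-- **Step-index monotonicity (downward closure)**: if a pair of values is
related at type `τ` in world `W` and `W' ⊒ W` (in particular `W'.k ≤ W.k`),
then the pair is related at `τ` in `W'`. -/
theorem V_mono (W W' : World) (τ : VTy) (v1 v2 : Val)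
    (h : Vrel W τ v1 v2) (hext : extends_ W' W) : Vrel W' τ v1 v2 := by
  unfold Vrel at *
  induction τ generalizing v1 v2 with
  | tvar n => simp [V] at h
  | unit => simpa [V] using h
  | int => simpa [V] using h
  | pair t1 t2 ih1 ih2 =>
    simp only [V] at h ⊢
    obtain ⟨a1, b1, a2, b2, e1, e2, ha, hb⟩ := h
    exact ⟨a1, b1, a2, b2, e1, e2, ih1 _ _ ha, ih2 _ _ hb⟩
  | mu t ih =>
    simp only [V] at h ⊢
    obtain ⟨w1, w2, e1, e2, hrec⟩ := h
    refine ⟨w1, w2, e1, e2, ?_⟩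
    intro j hj W'' hk hext''
    exact hrec j (lt_of_lt_of_le hj hext.1) W'' hk (extends_trans hext'' hext)

end FunTAL
end

section
/- Monadic bind for the biorthogonal expression relation: if (W, e1, e2) ∈ E⟦τ⟧ and for all W' ⊒ W and values v1, v2 with (W', v1, v2) ∈ V⟦τ⟧ we have (W', E1'[v1], E2'[v2]) ∈ E⟦τ'⟧, then (W, E1'[e1], E2'[e2]) ∈ E⟦τ'⟧. -/
namespace FunTAL

variable {World Term ECtx : Type}
  (ext : World → World → Prop)
  (plug : ECtx → Term → Term)
  (comp : ECtx → ECtx → ECtx)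
  (O : World → Term → Term → Prop)

def Krel (V : World → Term → Term → Prop) (W : World) (E1 E2 : ECtx) : Prop :=
  ∀ W', ext W W' → ∀ v1 v2, V W' v1 v2 → O W' (plug E1 v1) (plug E2 v2)

def Erel (V : World → Term → Term → Prop) (W : World) (e1 e2 : Term) : Prop :=
  ∀ E1 E2, Krel ext plug O V W E1 E2 → O W (plug E1 e1) (plug E2 e2)

/-- **Monadic bind for the biorthogonal expression relation**: if
`(W, e1, e2) ∈ E⟦τ⟧` and for all `W' ⊒ W` and values `v1, v2` with
`(W', v1, v2) ∈ V⟦τ⟧` we have `(W', E1'[v1], E2'[v2]) ∈ E⟦τ'⟧`, then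
`(W, E1'[e1], E2'[e2]) ∈ E⟦τ'⟧`. -/
theorem Erel_bind
    (ext_refl : ∀ W, ext W W)
    (ext_trans : ∀ W1 W2 W3, ext W1 W2 → ext W2 W3 → ext W1 W3)
    (plug_comp : ∀ E E' e, plug (comp E E') e = plug E (plug E' e))
    (V V' : World → Term → Term → Prop)   -- the value relations at τ and τ'
    (W : World) (e1 e2 : Term) (E1' E2' : ECtx)
    (he : Erel ext plug O V W e1 e2)
    (hcont : ∀ W', ext W W' → ∀ v1 v2, V W' v1 v2 →
      Erel ext plug O V' W' (plug E1' v1) (plug E2' v2)) :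
    Erel ext plug O V' W (plug E1' e1) (plug E2' e2) := by
  intro E1 E2 hK
  rw [← plug_comp, ← plug_comp]
  apply he
  intro W' hext v1 v2 hV
  rw [plug_comp, plug_comp]
  apply hcont W' hext v1 v2 hV
  intro W'' hext' w1 w2 hV'
  exact hK W'' (ext_trans _ _ _ hext hext') w1 w2 hV'

end FunTAL
end
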